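/- Let μ and ν be Borel probability measures on ℂ. On the space H = ℂ × L²(ℂ,μ) × L²(ℂ,ν), for a bounded continuous f : ℂ → ℂ define T_f(α,ψ₁,ψ₂) = (∫ f·(ψ₁+α) dμ, f·(ψ₁+α) − ∫ f·(ψ₁+α) dμ, 0) and for bounded continuous g : ℂ → ℂ define S_g(α,ψ₁,ψ₂) = (∫ g·(ψ₂+α) dν, 0, g·(ψ₂+α) − ∫ g·(ψ₂+α) dν). Let ω = (1,0,0). Then for every n ≥ 1 and all bounded continuous f₁,…,f_n, g₁,…,g_{n−1} : ℂ → ℂ, the first component of T_{f_n} S_{g_{n−1}} T_{f_{n−1}} ⋯ S_{g_1} T_{f_1} ω equals (∏_{k=1}^{n} ∫_ℂ f_k dμ) · (∏_{ℓ=1}^{n−1} ∫_ℂ g_ℓ dν). (This is the moment factorization expressing that the model operators N_x, N_y of the boolean model are boolean independent with respect to ω.) -/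
import Mathlib


open MeasureTheory

/-- The operator `T_f` of the boolean model on `ℂ ⊕ L²(ℂ,μ)₀ ⊕ L²(ℂ,ν)₀`, acting on triples
`(α, ψ₁, ψ₂)`. -/
noncomputable def boolT (μ : Measure ℂ) (f : ℂ → ℂ) (t : ℂ × (ℂ → ℂ) × (ℂ → ℂ)) :
    ℂ × (ℂ → ℂ) × (ℂ → ℂ) :=
  (∫ x, f x * (t.2.1 x + t.1) ∂μ,
   fun x => f x * (t.2.1 x + t.1) - ∫ x', f x' * (t.2.1 x' + t.1) ∂μ,
   0)

/-- The operator `S_g` of the boolean model. -/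
noncomputable def boolS (ν : Measure ℂ) (g : ℂ → ℂ) (t : ℂ × (ℂ → ℂ) × (ℂ → ℂ)) :
    ℂ × (ℂ → ℂ) × (ℂ → ℂ) :=
  (∫ y, g y * (t.2.2 y + t.1) ∂ν,
   0,
   fun y => g y * (t.2.2 y + t.1) - ∫ y', g y' * (t.2.2 y' + t.1) ∂ν)

/-- The alternating product `T_{f_{k+1}} S_{g_k} T_{f_k} ⋯ S_{g_1} T_{f_1}` applied to the
vector `ω = (1,0,0)` (indices shifted to start at `0`). -/
noncomputable def boolChain (μ ν : Measure ℂ) (f g : ℕ → ℂ → ℂ) :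
    ℕ → ℂ × (ℂ → ℂ) × (ℂ → ℂ)
  | 0 => boolT μ (f 0) (1, 0, 0)
  | k + 1 => boolT μ (f (k + 1)) (boolS ν (g k) (boolChain μ ν f g k))

lemma boolChain_third (μ ν : Measure ℂ) (f g : ℕ → ℂ → ℂ) (m : ℕ) :
    (boolChain μ ν f g m).2.2 = 0 := by
  cases m <;> rfl

lemma boolChain_fst (μ ν : Measure ℂ) [IsProbabilityMeasure μ] [IsProbabilityMeasure ν]
    (f g : ℕ → BoundedContinuousFunction ℂ ℂ) (m : ℕ) :
    (boolChain μ ν (fun k => f k) (fun k => g k) m).1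
      = (∏ k ∈ Finset.range (m + 1), ∫ x, f k x ∂μ)
        * ∏ k ∈ Finset.range m, ∫ y, g k y ∂ν := by
  induction m with
  | zero => simp [boolChain, boolT]
  | succ m ih =>
    have h3 := boolChain_third μ ν (fun k => f k) (fun k => g k) m
    simp only [boolChain, boolT, boolS, h3, Pi.zero_apply, zero_add,
      integral_mul_const, Finset.prod_range_succ]
    rw [ih, Finset.prod_range_succ]
    ring

/-- Moment factorization of the boolean model: the first component of
`T_{f_n} S_{g_{n−1}} ⋯ S_{g_1} T_{f_1} ω` equals `(∏ ∫ f_k dμ)·(∏ ∫ g_ℓ dν)`. -/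
theorem boolean_model_moment_factorization
    (μ ν : Measure ℂ) [IsProbabilityMeasure μ] [IsProbabilityMeasure ν]
    (n : ℕ) (hn : 1 ≤ n) (f g : ℕ → BoundedContinuousFunction ℂ ℂ) :
    (boolChain μ ν (fun k => f k) (fun k => g k) (n - 1)).1
      = (∏ k ∈ Finset.range n, ∫ x, f k x ∂μ)
        * ∏ k ∈ Finset.range (n - 1), ∫ y, g k y ∂ν := by
  obtain ⟨m, rfl⟩ : ∃ m, n = m + 1 := ⟨n - 1, (Nat.succ_pred_eq_of_pos hn).symm⟩
  simpa using boolChain_fst μ ν f g m
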